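/- arXiv:1902.08214 — 2 statements merged into one kernel-verified Lean document; each statement's English description precedes it below -/
import Mathlib

section
/- For all positive integers n, ∑_{P=1}^{n−1} σ₁(P)·σ₁(n−P) = (5/12)·σ₃(n) + (1/12)·σ₁(n) − (1/2)·n·σ₁(n), where σ_x(m) = ∑_{d | m} d^x. -/
/-!
Following Liouville, write `∑ σ(P) σ(n - P)` as `∑ a b` over the positive solutions of
`a x + b y = n`. This set is invariant under the swap `(a, x) ↔ (b, y)` and the transpose
`a ↔ x, b ↔ y`, and the shear `((a, x), (b, y)) ↦ ((a, x - y), (a + b, y))` maps its part `y < x`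
bijectively onto its part `a < b`. Writing `4 a b = (a + b)² - (a - b)²` and moving every
off-diagonal piece around with these three maps, everything cancels except sums over the diagonal
`a = b`, where `a = d` runs over the divisors of `n` and `x + y = n / d`; there the sums are
elementary and give `σ₃` and `σ₁`.
-/

open Finset

theorem Finset.sum_filter_comp_of_involutive {α M : Type*} [AddCommMonoid M] {s : Finset α}
    {φ : α → α} (hφ : Function.Involutive φ) (hmaps : ∀ a ∈ s, φ a ∈ s) (P : α → Prop)
    [DecidablePred P] (f : α → M) :
    ∑ a ∈ s with P (φ a), f (φ a) = ∑ a ∈ s with P a, f a := by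
  refine sum_nbij' φ φ ?_ ?_ (fun a _ => hφ a) (fun a _ => hφ a) fun _ _ => rfl
  · intro a ha
    rw [mem_filter] at ha ⊢
    exact ⟨hmaps a ha.1, ha.2⟩
  · intro a ha
    rw [mem_filter] at ha ⊢
    exact ⟨hmaps a ha.1, (hφ a).symm ▸ ha.2⟩

theorem Finset.sum_filter_lt_add_sum_filter_gt_add_sum_filter_eq {ι α M : Type*} [LinearOrder α]
    [AddCommMonoid M] (s : Finset ι) (g h : ι → α) (f : ι → M) :
    ∑ i ∈ s with g i < h i, f i + ∑ i ∈ s with h i < g i, f i + ∑ i ∈ s with g i = h i, f i =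
      ∑ i ∈ s, f i := by
  rw [add_assoc, ← sum_filter_add_sum_filter_not s (fun i => g i < h i),
    ← sum_filter_add_sum_filter_not (s.filter fun i => ¬g i < h i) (fun i => h i < g i),
    filter_filter, filter_filter]
  congr 3 <;> refine filter_congr fun i _ => ?_
  · exact ⟨fun hi => ⟨hi.not_gt, hi⟩, And.right⟩
  · exact ⟨fun hi => ⟨hi.not_lt, hi.symm.not_lt⟩,
      fun hi => le_antisymm (not_lt.1 hi.2) (not_lt.1 hi.1)⟩

theorem Finset.sum_Ico_one_sq {R : Type*} [CommRing R] (m : ℕ) :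
    6 * ∑ k ∈ Ico 1 m, (k : R) ^ 2 = m * (m - 1) * (2 * m - 1) := by
  induction m with
  | zero => simp
  | succ m ih =>
    rcases Nat.eq_zero_or_pos m with rfl | hm
    · simp
    · rw [sum_Ico_succ_top hm, mul_add, ih]
      push_cast
      ring

namespace SigmaConvolution

def representations (n : ℕ) : Finset ((ℕ × ℕ) × (ℕ × ℕ)) :=
  (antidiagonal n).biUnion fun m => m.1.divisorsAntidiagonal ×ˢ m.2.divisorsAntidiagonal

theorem mem_representations {n a x b y : ℕ} :
    ((a, x), (b, y)) ∈ representations n ↔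
      a * x + b * y = n ∧ 0 < a ∧ 0 < x ∧ 0 < b ∧ 0 < y := by
  simp only [representations, mem_biUnion, HasAntidiagonal.mem_antidiagonal, mem_product,
    Nat.mem_divisorsAntidiagonal, Prod.exists]
  constructor
  · rintro ⟨_, _, rfl, ⟨rfl, h₁⟩, rfl, h₂⟩
    simp only [ne_eq, mul_eq_zero, not_or, ← Nat.pos_iff_ne_zero] at h₁ h₂
    exact ⟨rfl, h₁.1, h₁.2, h₂.1, h₂.2⟩
  · rintro ⟨rfl, ha, hx, hb, hy⟩
    exact ⟨a * x, b * y, rfl, ⟨rfl, by positivity⟩, rfl, by positivity⟩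

theorem sum_representations_eq_sum_antidiagonal {M : Type*} [AddCommMonoid M] (n : ℕ)
    (F : ℕ × ℕ → ℕ × ℕ → M) :
    ∑ p ∈ representations n, F p.1 p.2 =
      ∑ m ∈ antidiagonal n, ∑ u ∈ m.1.divisorsAntidiagonal, ∑ v ∈ m.2.divisorsAntidiagonal,
        F u v := by
  rw [representations, sum_biUnion]
  · simp only [sum_product]
  · intro m _ m' _ hne
    refine disjoint_left.2 fun p hp hp' => hne ?_
    simp only [mem_product, Nat.mem_divisorsAntidiagonal] at hp hp'
    exact Prod.ext (hp.1.1.symm.trans hp'.1.1) (hp.2.1.symm.trans hp'.2.1)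

theorem sum_representations_mul {R : Type*} [CommSemiring R] (n : ℕ) (f g : ℕ → R) :
    ∑ p ∈ representations n, f p.1.1 * g p.2.1 =
      ∑ P ∈ Ico 1 n, (∑ d ∈ P.divisors, f d) * (∑ d ∈ (n - P).divisors, g d) := by
  rw [sum_representations_eq_sum_antidiagonal n fun u v => f u.1 * g v.1]
  simp only [← sum_mul_sum, Nat.sum_divisorsAntidiagonal fun a _ => f a,
    Nat.sum_divisorsAntidiagonal fun a _ => g a]
  rw [Nat.sum_antidiagonal_eq_sum_range_succ
    fun i j => (∑ d ∈ i.divisors, f d) * ∑ d ∈ j.divisors, g d, sum_range_succ]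
  -- the terms `P = 0` and `P = n` vanish because `Nat.divisors 0 = ∅`
  rcases Nat.eq_zero_or_pos n with rfl | hn
  · simp
  · simp [sum_range_eq_add_Ico _ hn]

theorem swap_mem_representations {n : ℕ} {p : (ℕ × ℕ) × (ℕ × ℕ)}
    (hp : p ∈ representations n) : p.swap ∈ representations n := by
  obtain ⟨⟨a, x⟩, b, y⟩ := p
  rw [mem_representations] at hp
  rw [Prod.swap_prod_mk, mem_representations]
  omega

theorem transpose_mem_representations {n : ℕ} {p : (ℕ × ℕ) × (ℕ × ℕ)}
    (hp : p ∈ representations n) : (p.1.swap, p.2.swap) ∈ representations n := by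
  obtain ⟨⟨a, x⟩, b, y⟩ := p
  rw [mem_representations] at hp
  rw [Prod.swap_prod_mk, Prod.swap_prod_mk, mem_representations, mul_comm x, mul_comm y]
  omega

section Symmetries

variable {M : Type*} [AddCommMonoid M] (n : ℕ) (P : (ℕ × ℕ) × (ℕ × ℕ) → Prop) [DecidablePred P]
  (F : (ℕ × ℕ) × (ℕ × ℕ) → M)

theorem sum_filter_representations_swap :
    ∑ p ∈ representations n with P p.swap, F p.swap = ∑ p ∈ representations n with P p, F p :=
  sum_filter_comp_of_involutive Prod.swap_swap (fun _ => swap_mem_representations) P F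

theorem sum_filter_representations_transpose :
    ∑ p ∈ representations n with P (p.1.swap, p.2.swap), F (p.1.swap, p.2.swap) =
      ∑ p ∈ representations n with P p, F p :=
  sum_filter_comp_of_involutive (fun _ => rfl) (fun _ => transpose_mem_representations) P F

end Symmetries

theorem sum_filter_representations_shear {R M : Type*} [AddCommGroupWithOne R] [AddCommMonoid M]
    (n : ℕ) (F : R → R → M) :
    ∑ p ∈ representations n with p.2.2 < p.1.2, F p.1.1 p.2.1 =
      ∑ p ∈ representations n with p.1.1 < p.2.1, F p.1.1 (p.2.1 - p.1.1) := by
  refine sum_nbij' (fun p => ((p.1.1, p.1.2 - p.2.2), (p.1.1 + p.2.1, p.2.2)))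
    (fun p => ((p.1.1, p.1.2 + p.2.2), (p.2.1 - p.1.1, p.2.2))) ?_ ?_ ?_ ?_ ?_
  · rintro ⟨⟨a, x⟩, b, y⟩ hp
    simp only [mem_filter, mem_representations] at hp ⊢
    obtain ⟨⟨h, ha, hx, hb, hy⟩, hyx⟩ := hp
    obtain ⟨k, rfl⟩ := Nat.exists_eq_add_of_lt hyx
    refine ⟨⟨?_, ha, by omega, by omega, hy⟩, by omega⟩
    rw [← h, show y + k + 1 - y = k + 1 by omega]
    ring
  · rintro ⟨⟨a, x⟩, b, y⟩ hp
    simp only [mem_filter, mem_representations] at hp ⊢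
    obtain ⟨⟨h, ha, hx, hb, hy⟩, hab⟩ := hp
    obtain ⟨k, rfl⟩ := Nat.exists_eq_add_of_lt hab
    refine ⟨⟨?_, ha, by omega, by omega, hy⟩, by omega⟩
    rw [← h, show a + k + 1 - a = k + 1 by omega]
    ring
  · rintro ⟨⟨a, x⟩, b, y⟩ hp
    simp only [mem_filter] at hp
    simp only [Prod.mk.injEq, true_and, and_true]
    omega
  · rintro ⟨⟨a, x⟩, b, y⟩ hp
    simp only [mem_filter] at hp
    simp only [Prod.mk.injEq, true_and, and_true]
    omega
  · rintro ⟨⟨a, x⟩, b, y⟩ -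
    simp

section Liouville

variable {R : Type*} [CommRing R] (n : ℕ)

theorem sum_representations_sub_sq :
    ∑ p ∈ representations n, ((p.1.1 : R) - p.2.1) ^ 2 =
      2 * ∑ p ∈ representations n with p.1.2 < p.2.2, (p.1.1 : R) ^ 2 := by
  have hsplit := sum_filter_lt_add_sum_filter_gt_add_sum_filter_eq (representations n)
    (fun p => p.1.1) (fun p => p.2.1) fun p => ((p.1.1 : R) - p.2.1) ^ 2
  have hdiag : ∑ p ∈ representations n with p.1.1 = p.2.1, ((p.1.1 : R) - p.2.1) ^ 2 = 0 :=
    sum_eq_zero fun p hp => by rw [(mem_filter.1 hp).2, sub_self, sq, zero_mul]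
  have hswap : ∑ p ∈ representations n with p.2.1 < p.1.1, ((p.1.1 : R) - p.2.1) ^ 2 =
      ∑ p ∈ representations n with p.1.1 < p.2.1, ((p.2.1 : R) - p.1.1) ^ 2 :=
    sum_filter_representations_swap n (fun p => p.1.1 < p.2.1) fun p => ((p.2.1 : R) - p.1.1) ^ 2
  have hshear := sum_filter_representations_shear n fun (_ v : R) => v ^ 2
  have hswap' : ∑ p ∈ representations n with p.2.2 < p.1.2, (p.2.1 : R) ^ 2 =
      ∑ p ∈ representations n with p.1.2 < p.2.2, (p.1.1 : R) ^ 2 :=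
    sum_filter_representations_swap n (fun p => p.1.2 < p.2.2) fun p => (p.1.1 : R) ^ 2
  have hsymm : ∑ p ∈ representations n with p.1.1 < p.2.1, ((p.1.1 : R) - p.2.1) ^ 2 =
      ∑ p ∈ representations n with p.1.1 < p.2.1, ((p.2.1 : R) - p.1.1) ^ 2 :=
    sum_congr rfl fun _ _ => by ring
  linear_combination -hsplit + hdiag + hswap - 2 * hshear + 2 * hswap' + hsymm

theorem sum_representations_add_sq :
    ∑ p ∈ representations n, ((p.1.1 : R) + p.2.1) ^ 2 =
      2 * ∑ p ∈ representations n with p.2.1 < p.1.1, (p.1.1 : R) ^ 2 +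
        ∑ p ∈ representations n with p.1.2 = p.2.2, ((p.1.1 : R) + p.2.1) ^ 2 := by
  have hsplit := sum_filter_lt_add_sum_filter_gt_add_sum_filter_eq (representations n)
    (fun p => p.1.2) (fun p => p.2.2) fun p => ((p.1.1 : R) + p.2.1) ^ 2
  have hswap : ∑ p ∈ representations n with p.1.2 < p.2.2, ((p.1.1 : R) + p.2.1) ^ 2 =
      ∑ p ∈ representations n with p.2.2 < p.1.2, ((p.1.1 : R) + p.2.1) ^ 2 :=
    (sum_filter_representations_swap n (fun p => p.2.2 < p.1.2)
      fun p => ((p.2.1 : R) + p.1.1) ^ 2).trans (sum_congr rfl fun _ _ => by ring)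
  have hshear : ∑ p ∈ representations n with p.2.2 < p.1.2, ((p.1.1 : R) + p.2.1) ^ 2 =
      ∑ p ∈ representations n with p.1.1 < p.2.1, (p.2.1 : R) ^ 2 :=
    (sum_filter_representations_shear n fun (u v : R) => (u + v) ^ 2).trans
      (sum_congr rfl fun _ _ => by ring)
  have hswap' : ∑ p ∈ representations n with p.1.1 < p.2.1, (p.2.1 : R) ^ 2 =
      ∑ p ∈ representations n with p.2.1 < p.1.1, (p.1.1 : R) ^ 2 :=
    sum_filter_representations_swap n (fun p => p.2.1 < p.1.1) fun p => (p.1.1 : R) ^ 2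
  linear_combination -hsplit + hswap + 2 * hshear + 2 * hswap'

theorem sum_filter_representations_sq_sub :
    ∑ p ∈ representations n with p.1.2 < p.2.2, (p.1.1 : R) ^ 2 -
        ∑ p ∈ representations n with p.2.1 < p.1.1, (p.1.1 : R) ^ 2 =
      ∑ p ∈ representations n with p.1.1 = p.2.1, (p.1.1 : R) ^ 2 -
        ∑ p ∈ representations n with p.1.2 = p.2.2, (p.1.1 : R) ^ 2 := by
  have hsplit := sum_filter_lt_add_sum_filter_gt_add_sum_filter_eq (representations n)
    (fun p => p.1.2) (fun p => p.2.2) fun p => (p.1.1 : R) ^ 2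
  have hsplit' := sum_filter_lt_add_sum_filter_gt_add_sum_filter_eq (representations n)
    (fun p => p.1.1) (fun p => p.2.1) fun p => (p.1.1 : R) ^ 2
  have hshear := sum_filter_representations_shear n fun (u _ : R) => u ^ 2
  linear_combination hsplit - hsplit' - hshear

theorem four_mul_sum_representations_mul :
    4 * ∑ p ∈ representations n, (p.1.1 : R) * p.2.1 =
      ∑ p ∈ representations n with p.1.2 = p.2.2, (2 * (p.1.1 : R) ^ 2 + (p.1.1 + p.2.1) ^ 2) -
        2 * ∑ p ∈ representations n with p.1.1 = p.2.1, (p.1.1 : R) ^ 2 := by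
  have hpolar : 4 * ∑ p ∈ representations n, (p.1.1 : R) * p.2.1 =
      ∑ p ∈ representations n, ((p.1.1 : R) + p.2.1) ^ 2 -
        ∑ p ∈ representations n, ((p.1.1 : R) - p.2.1) ^ 2 := by
    rw [mul_sum, ← sum_sub_distrib]
    exact sum_congr rfl fun _ _ => by ring
  rw [hpolar, sum_representations_add_sq, sum_representations_sub_sq, sum_add_distrib, ← mul_sum]
  linear_combination -2 * sum_filter_representations_sq_sub (R := R) n

end Liouville

theorem sum_filter_representations_fst_eq_fst {M : Type*} [AddCommMonoid M] (n : ℕ)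
    (G : ℕ → ℕ → ℕ → M) :
    ∑ p ∈ representations n with p.1.1 = p.2.1, G p.1.1 p.1.2 p.2.2 =
      ∑ d ∈ n.divisors, ∑ x ∈ Ico 1 (n / d), G d x (n / d - x) := by
  have hdiv : ∀ {a x y}, a * x + a * y = n → 0 < a → n / a = x + y := fun h ha => by
    rw [← h, ← mul_add, Nat.mul_div_cancel_left _ ha]
  rw [sum_sigma']
  refine sum_nbij' (fun p => ⟨p.1.1, p.1.2⟩) (fun q => ((q.1, q.2), (q.1, n / q.1 - q.2)))
    ?_ ?_ ?_ ?_ ?_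
  · rintro ⟨⟨a, x⟩, b, y⟩ hp
    simp only [mem_filter, mem_representations] at hp
    obtain ⟨⟨h, ha, hx, -, hy⟩, rfl⟩ := hp
    simp only [mem_sigma, Nat.mem_divisors, mem_Ico, hdiv h ha]
    exact ⟨⟨Dvd.intro _ ((mul_add a x y).trans h), by rw [← h]; positivity⟩, hx, by omega⟩
  · rintro ⟨d, x⟩ hq
    simp only [mem_sigma, Nat.mem_divisors, mem_Ico] at hq
    obtain ⟨⟨⟨e, rfl⟩, hn⟩, hx, hxe⟩ := hq
    have hd : 0 < d := Nat.pos_of_ne_zero (left_ne_zero_of_mul hn)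
    rw [Nat.mul_div_cancel_left _ hd] at hxe ⊢
    simp only [mem_filter, mem_representations]
    refine ⟨⟨?_, hd, hx, hd, by omega⟩, trivial⟩
    rw [← mul_add, Nat.add_sub_cancel' hxe.le]
  · rintro ⟨⟨a, x⟩, b, y⟩ hp
    simp only [mem_filter, mem_representations] at hp
    obtain ⟨⟨h, ha, -, -, -⟩, rfl⟩ := hp
    simp only [hdiv h ha, Nat.add_sub_cancel_left]
  · rintro ⟨d, x⟩ -
    rfl
  · rintro ⟨⟨a, x⟩, b, y⟩ hp
    simp only [mem_filter, mem_representations] at hp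
    obtain ⟨⟨h, ha, -, -, -⟩, rfl⟩ := hp
    simp only [hdiv h ha, Nat.add_sub_cancel_left]

theorem sum_representations_mul_eq_sum_divisors (n : ℕ) :
    ∑ p ∈ representations n, (p.1.1 : ℚ) * p.2.1 =
      ∑ d ∈ n.divisors, (5 / 12 * (d : ℚ) ^ 3 + 1 / 12 * d - 1 / 2 * n * d) := by
  have hsnd : ∑ p ∈ representations n with p.1.2 = p.2.2,
      (2 * (p.1.1 : ℚ) ^ 2 + (p.1.1 + p.2.1) ^ 2) =
        ∑ d ∈ n.divisors, ∑ x ∈ Ico 1 d, (2 * (x : ℚ) ^ 2 + d ^ 2) := by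
    rw [← sum_filter_representations_transpose,
      ← Nat.sum_div_divisors n fun m => ∑ x ∈ Ico 1 m, (2 * (x : ℚ) ^ 2 + m ^ 2)]
    refine (sum_filter_representations_fst_eq_fst n
      fun _ x y => 2 * (x : ℚ) ^ 2 + ((x : ℚ) + y) ^ 2).trans ?_
    refine sum_congr rfl fun d _ => sum_congr rfl fun x hx => ?_
    rw [← Nat.cast_add, Nat.add_sub_cancel' (mem_Ico.1 hx).2.le]
  have hfst := sum_filter_representations_fst_eq_fst n fun d _ _ => (d : ℚ) ^ 2
  have hterm : ∀ d ∈ n.divisors, 4 * (5 / 12 * (d : ℚ) ^ 3 + 1 / 12 * d - 1 / 2 * n * d) =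
      ∑ x ∈ Ico 1 d, (2 * (x : ℚ) ^ 2 + d ^ 2) - 2 * ∑ x ∈ Ico 1 (n / d), (d : ℚ) ^ 2 := by
    intro d hd
    obtain ⟨⟨e, rfl⟩, hn⟩ := Nat.mem_divisors.1 hd
    have hd : 0 < d := Nat.pos_of_ne_zero (left_ne_zero_of_mul hn)
    have he : 0 < e := Nat.pos_of_ne_zero (right_ne_zero_of_mul hn)
    rw [Nat.mul_div_cancel_left _ hd, sum_add_distrib, ← mul_sum, sum_const, sum_const,
      Nat.card_Ico, Nat.card_Ico, nsmul_eq_mul, nsmul_eq_mul, Nat.cast_sub hd, Nat.cast_sub he]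
    push_cast
    linear_combination -(1 / 3 : ℚ) * sum_Ico_one_sq (R := ℚ) d
  rw [← mul_right_inj' (four_ne_zero' ℚ), four_mul_sum_representations_mul, hsnd, hfst, mul_sum,
    mul_sum, ← sum_sub_distrib]
  exact (sum_congr rfl hterm).symm

end SigmaConvolution

theorem ramanujan_sigma_convolution_general (n : ℕ) :
    ∑ P ∈ Finset.Ico 1 n,
        ((∑ d ∈ P.divisors, (d : ℚ)) * (∑ d ∈ (n - P).divisors, (d : ℚ)))
      = (5 / 12) * (∑ d ∈ n.divisors, (d : ℚ) ^ 3)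
        + (1 / 12) * (∑ d ∈ n.divisors, (d : ℚ))
        - (1 / 2) * (n : ℚ) * (∑ d ∈ n.divisors, (d : ℚ)) := by
  rw [← SigmaConvolution.sum_representations_mul,
    SigmaConvolution.sum_representations_mul_eq_sum_divisors, sum_sub_distrib, sum_add_distrib,
    mul_sum, mul_sum, mul_sum]

theorem ramanujan_sigma_convolution (n : ℕ) (hn : 0 < n) :
    ∑ P ∈ Finset.Ico 1 n,
        ((∑ d ∈ P.divisors, (d : ℚ)) * (∑ d ∈ (n - P).divisors, (d : ℚ)))
      = (5 / 12) * (∑ d ∈ n.divisors, (d : ℚ) ^ 3)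
        + (1 / 12) * (∑ d ∈ n.divisors, (d : ℚ))
        - (1 / 2) * (n : ℚ) * (∑ d ∈ n.divisors, (d : ℚ)) :=
  ramanujan_sigma_convolution_general n
end

section
/- For every positive integer n, the sum ∑ over quadruples (p, q, k, l) of positive integers with k > l and p·k + q·l = n of k·l equals (5/24)·σ₃(n) + (1/2)·σ₂(n) + (1/24)·σ₁(n) − (3/4)·n·σ₁(n). -/
/-!
Let `Q` be the set of positive solutions `(p, q, k, l)` of `p k + q l = n` and
`W = k² + k l + l²`. The shear `(p, q, k, l) ↦ (p, p + q, k - l, l)` maps `{l < k}` bijectively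
onto `{p < q}` and lowers `W` by `2 k l`. Since `(p, q, k, l) ↦ (q, p, l, k)` preserves `Q` and `W`,
`∑_Q W = 2 ∑_{l<k} W + ∑_{l=k} W = 2 ∑_{p<q} W + ∑_{p=q} W`, hence
`4 ∑_{l<k} k l = ∑_{p=q} W - ∑_{l=k} W`. Both diagonals are parametrised by a factorisation
`n = m d` together with a splitting `m = a + b`, which turns the two diagonal sums into divisor
sums.
-/

open Finset

theorem Finset.sum_filter_comp_of_involutive_s6 {ι M : Type*} [AddCommMonoid M] {s : Finset ι}
    {σ : ι → ι} (hσ : Function.Involutive σ) (hs : ∀ x ∈ s, σ x ∈ s) (P : ι → Prop)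
    [DecidablePred P] (f : ι → M) :
    ∑ x ∈ s.filter (fun x => P (σ x)), f (σ x) = ∑ x ∈ s.filter P, f x := by
  refine sum_nbij' σ σ (fun x hx => ?_) (fun x hx => ?_) (fun x _ => hσ x) (fun x _ => hσ x)
    (fun _ _ => rfl)
  · simp only [mem_filter] at hx ⊢
    exact ⟨hs x hx.1, hx.2⟩
  · simp only [mem_filter] at hx ⊢
    exact ⟨hs x hx.1, by rw [hσ]; exact hx.2⟩

theorem Finset.sum_eq_two_mul_sum_filter_lt_add_sum_filter_eq {ι β R : Type*} [LinearOrder β]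
    [Semiring R] {s : Finset ι} {σ : ι → ι} (hσ : Function.Involutive σ)
    (hs : ∀ x ∈ s, σ x ∈ s) {c d : ι → β} (hcd : ∀ x, c (σ x) = d x) {f : ι → R}
    (hf : ∀ x, f (σ x) = f x) :
    ∑ x ∈ s, f x
      = 2 * ∑ x ∈ s.filter (fun x => c x < d x), f x
        + ∑ x ∈ s.filter (fun x => c x = d x), f x := by
  have hdc : ∀ x, d (σ x) = c x := fun x => by rw [← hcd, hσ]
  have hgt : ∑ x ∈ s.filter (fun x => d x < c x), f x
      = ∑ x ∈ s.filter (fun x => c x < d x), f x := by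
    simpa only [hcd, hdc, hf] using sum_filter_comp_of_involutive_s6 hσ hs (fun x => c x < d x) f
  have hge : ∑ x ∈ s.filter (fun x => ¬ c x < d x), f x
      = ∑ x ∈ s.filter (fun x => d x < c x), f x + ∑ x ∈ s.filter (fun x => c x = d x), f x := by
    rw [← sum_filter_add_sum_filter_not (s.filter _) (fun x => d x < c x), filter_filter,
      filter_filter]
    congr 1 <;> refine sum_congr (filter_congr fun x _ => ?_) fun _ _ => rfl
    · exact and_iff_right_of_imp fun h => h.not_gt
    · rw [not_lt, not_lt, le_antisymm_iff, and_comm]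
  rw [← sum_filter_add_sum_filter_not s (fun x => c x < d x), hge, hgt, two_mul, add_assoc]

namespace TwoCylinder

def solutions (n : ℕ) : Finset (ℕ × ℕ × ℕ × ℕ) :=
  (Ioc 0 n ×ˢ Ioc 0 n ×ˢ Ioc 0 n ×ˢ Ioc 0 n).filter
    (fun t => t.1 * t.2.2.1 + t.2.1 * t.2.2.2 = n)

theorem mem_solutions {n p q k l : ℕ} :
    (p, q, k, l) ∈ solutions n ↔ 0 < p ∧ 0 < q ∧ 0 < k ∧ 0 < l ∧ p * k + q * l = n := by
  simp only [solutions, mem_filter, mem_product, mem_Ioc]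
  constructor
  · rintro ⟨⟨⟨hp, -⟩, ⟨hq, -⟩, ⟨hk, -⟩, ⟨hl, -⟩⟩, he⟩
    exact ⟨hp, hq, hk, hl, he⟩
  · rintro ⟨hp, hq, hk, hl, rfl⟩
    exact ⟨⟨⟨hp, by nlinarith⟩, ⟨hq, by nlinarith⟩, ⟨hk, by nlinarith⟩, ⟨hl, by nlinarith⟩⟩, rfl⟩

def swap (t : ℕ × ℕ × ℕ × ℕ) : ℕ × ℕ × ℕ × ℕ := (t.2.1, t.1, t.2.2.2, t.2.2.1)

def transpose (t : ℕ × ℕ × ℕ × ℕ) : ℕ × ℕ × ℕ × ℕ := (t.2.2.1, t.2.2.2, t.1, t.2.1)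

theorem swap_involutive : Function.Involutive swap := fun _ => rfl

theorem transpose_involutive : Function.Involutive transpose := fun _ => rfl

theorem swap_mem_solutions {n : ℕ} : ∀ t ∈ solutions n, swap t ∈ solutions n := by
  rintro ⟨p, q, k, l⟩ ht
  obtain ⟨hp, hq, hk, hl, he⟩ := mem_solutions.1 ht
  exact mem_solutions.2 ⟨hq, hp, hl, hk, by rw [← he]; ring⟩

theorem transpose_mem_solutions {n : ℕ} : ∀ t ∈ solutions n, transpose t ∈ solutions n := by
  rintro ⟨p, q, k, l⟩ ht
  obtain ⟨hp, hq, hk, hl, he⟩ := mem_solutions.1 ht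
  exact mem_solutions.2 ⟨hk, hl, hp, hq, by rw [← he]; ring⟩

theorem sum_filter_widths_lt_shear {M : Type*} [AddCommMonoid M] (n : ℕ) (f : ℕ × ℕ × ℕ × ℕ → M) :
    ∑ t ∈ (solutions n).filter (fun t => t.2.2.2 < t.2.2.1),
        f (t.1, t.1 + t.2.1, t.2.2.1 - t.2.2.2, t.2.2.2)
      = ∑ t ∈ (solutions n).filter (fun t => t.1 < t.2.1), f t := by
  refine sum_nbij' (fun t => (t.1, t.1 + t.2.1, t.2.2.1 - t.2.2.2, t.2.2.2))
    (fun t => (t.1, t.2.1 - t.1, t.2.2.1 + t.2.2.2, t.2.2.2)) ?_ ?_ ?_ ?_ fun _ _ => rfl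
  · rintro ⟨p, q, k, l⟩ ht
    simp only [mem_filter, mem_solutions] at ht ⊢
    obtain ⟨⟨hp, hq, hk, hl, he⟩, hlk⟩ := ht
    refine ⟨⟨hp, by omega, by omega, hl, ?_⟩, by omega⟩
    zify [hlk.le] at he ⊢
    linear_combination he
  · rintro ⟨p, q, k, l⟩ ht
    simp only [mem_filter, mem_solutions] at ht ⊢
    obtain ⟨⟨hp, hq, hk, hl, he⟩, hpq⟩ := ht
    refine ⟨⟨hp, by omega, by omega, hl, ?_⟩, by omega⟩
    zify [hpq.le] at he ⊢
    linear_combination he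
  · rintro ⟨p, q, k, l⟩ ht
    simp only [mem_filter, mem_solutions, Prod.mk.injEq, true_and, and_true] at ht ⊢
    omega
  · rintro ⟨p, q, k, l⟩ ht
    simp only [mem_filter, mem_solutions, Prod.mk.injEq, true_and, and_true] at ht ⊢
    omega

theorem sum_filter_widths_eq_sum_divisorsAntidiagonal {M : Type*} [AddCommMonoid M] (n : ℕ)
    (f : ℕ × ℕ × ℕ × ℕ → M) :
    ∑ t ∈ (solutions n).filter (fun t => t.2.2.2 = t.2.2.1), f t
      = ∑ x ∈ n.divisorsAntidiagonal, ∑ a ∈ Ioo 0 x.1, f (a, x.1 - a, x.2, x.2) := by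
  rw [← sum_sigma n.divisorsAntidiagonal (fun x => Ioo 0 x.1)
    (fun x => f (x.2, x.1.1 - x.2, x.1.2, x.1.2))]
  refine sum_nbij' (fun t => ⟨(t.1 + t.2.1, t.2.2.1), t.1⟩)
    (fun x => (x.2, x.1.1 - x.2, x.1.2, x.1.2)) ?_ ?_ ?_ ?_ ?_
  · rintro ⟨p, q, k, l⟩ ht
    simp only [mem_filter, mem_solutions] at ht
    obtain ⟨⟨hp, hq, hk, hl, he⟩, rfl⟩ := ht
    simp only [mem_sigma, Nat.mem_divisorsAntidiagonal, mem_Ioo]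
    exact ⟨⟨by rw [← he]; ring, by rw [← he]; positivity⟩, hp, by omega⟩
  · rintro ⟨⟨m, d⟩, a⟩ hx
    simp only [mem_sigma, Nat.mem_divisorsAntidiagonal, mem_Ioo] at hx
    obtain ⟨⟨rfl, hn⟩, ha, ham⟩ := hx
    have hd : 0 < d := Nat.pos_of_ne_zero (right_ne_zero_of_mul hn)
    simp only [mem_filter, mem_solutions]
    refine ⟨⟨ha, by omega, hd, hd, ?_⟩, trivial⟩
    zify [ham.le]
    ring
  · rintro ⟨p, q, k, l⟩ ht
    simp only [mem_filter, mem_solutions] at ht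
    obtain ⟨-, rfl⟩ := ht
    simp
  · rintro ⟨⟨m, d⟩, a⟩ hx
    simp only [mem_sigma, Nat.mem_divisorsAntidiagonal, mem_Ioo] at hx
    simp only [Sigma.mk.injEq, Prod.mk.injEq, heq_eq_eq, and_true]
    omega
  · rintro ⟨p, q, k, l⟩ ht
    simp only [mem_filter, mem_solutions] at ht
    obtain ⟨-, rfl⟩ := ht
    simp

def widthForm (t : ℕ × ℕ × ℕ × ℕ) : ℚ :=
  (t.2.2.1 : ℚ) ^ 2 + t.2.2.1 * t.2.2.2 + (t.2.2.2 : ℚ) ^ 2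

theorem sum_filter_widths_lt_widthForm_sub (n : ℕ) :
    ∑ t ∈ (solutions n).filter (fun t => t.2.2.2 < t.2.2.1), widthForm t
        - 2 * ∑ t ∈ (solutions n).filter (fun t => t.2.2.2 < t.2.2.1), (t.2.2.1 * t.2.2.2 : ℚ)
      = ∑ t ∈ (solutions n).filter (fun t => t.1 < t.2.1), widthForm t := by
  rw [← sum_filter_widths_lt_shear, mul_sum, ← sum_sub_distrib]
  refine sum_congr rfl fun t ht => ?_
  rw [widthForm, widthForm, Nat.cast_sub (mem_filter.1 ht).2.le]
  ring

theorem four_mul_sum_filter_widths_lt (n : ℕ) :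
    4 * ∑ t ∈ (solutions n).filter (fun t => t.2.2.2 < t.2.2.1), (t.2.2.1 * t.2.2.2 : ℚ)
      = ∑ t ∈ (solutions n).filter (fun t => t.1 = t.2.1), widthForm t
        - ∑ t ∈ (solutions n).filter (fun t => t.2.2.2 = t.2.2.1), widthForm t := by
  have hsymm : ∀ t, widthForm (swap t) = widthForm t := fun t => by
    simp only [widthForm, swap]; ring
  have hheights := sum_eq_two_mul_sum_filter_lt_add_sum_filter_eq swap_involutive
    (swap_mem_solutions (n := n)) (c := fun t => t.1) (d := fun t => t.2.1) (fun _ => rfl) hsymm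
  have hwidths := sum_eq_two_mul_sum_filter_lt_add_sum_filter_eq swap_involutive
    (swap_mem_solutions (n := n)) (c := fun t => t.2.2.2) (d := fun t => t.2.2.1) (fun _ => rfl)
    hsymm
  have hshear := sum_filter_widths_lt_widthForm_sub n
  linarith

theorem sum_range_sq_sub_mul_add_sq (c : ℚ) (m : ℕ) :
    ∑ a ∈ range m, (c ^ 2 - c * a + (a : ℚ) ^ 2)
      = c ^ 2 * m - c * m * (m - 1) / 2 + m * (m - 1) * (2 * m - 1) / 6 := by
  induction m with
  | zero => simp
  | succ m ih => rw [sum_range_succ, ih]; push_cast; ring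

theorem sum_Ioo_sq_add_mul_add_sq (m : ℕ) :
    ∑ a ∈ Ioo 0 m, ((a : ℚ) ^ 2 + a * ((m - a : ℕ) : ℚ) + ((m - a : ℕ) : ℚ) ^ 2)
      = (5 * (m : ℚ) ^ 3 - 6 * (m : ℚ) ^ 2 + m) / 6 := by
  rcases Nat.eq_zero_or_pos m with rfl | hm
  · simp
  have hrange := sum_range_sq_sub_mul_add_sq m m
  rw [sum_range_eq_add_Ico _ hm, show Ico 1 m = Ioo 0 m from Ico_add_one_left_eq_Ioo 0 m]
    at hrange
  have hsummand : ∀ a ∈ Ioo 0 m, (a : ℚ) ^ 2 + a * ((m - a : ℕ) : ℚ) + ((m - a : ℕ) : ℚ) ^ 2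
      = (m : ℚ) ^ 2 - m * a + (a : ℚ) ^ 2 := fun a ha => by
    rw [Nat.cast_sub (mem_Ioo.1 ha).2.le]; ring
  rw [sum_congr rfl hsummand]
  linear_combination hrange

theorem sum_filter_widths_eq_widthForm (n : ℕ) :
    ∑ t ∈ (solutions n).filter (fun t => t.2.2.2 = t.2.2.1), widthForm t
      = 3 * n * ∑ d ∈ n.divisors, (d : ℚ) - 3 * ∑ d ∈ n.divisors, (d : ℚ) ^ 2 := by
  calc ∑ t ∈ (solutions n).filter (fun t => t.2.2.2 = t.2.2.1), widthForm t
      = ∑ x ∈ n.divisorsAntidiagonal, (3 * n * (x.2 : ℚ) - 3 * (x.2 : ℚ) ^ 2) := by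
        rw [sum_filter_widths_eq_sum_divisorsAntidiagonal]
        refine sum_congr rfl fun x hx => ?_
        obtain ⟨hmd, hn⟩ := Nat.mem_divisorsAntidiagonal.1 hx
        have hm : 1 ≤ x.1 := Nat.pos_of_ne_zero (left_ne_zero_of_mul (hmd ▸ hn))
        simp only [widthForm, sum_const, Nat.card_Ioo, nsmul_eq_mul, Nat.sub_zero]
        rw [Nat.cast_sub hm, ← hmd]
        push_cast
        ring
    _ = ∑ d ∈ n.divisors, (3 * n * (d : ℚ) - 3 * (d : ℚ) ^ 2) :=
        Nat.sum_divisorsAntidiagonal' fun _ d => 3 * n * (d : ℚ) - 3 * (d : ℚ) ^ 2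
    _ = _ := by rw [sum_sub_distrib, mul_sum, mul_sum]

theorem sum_filter_heights_eq_widthForm (n : ℕ) :
    ∑ t ∈ (solutions n).filter (fun t => t.1 = t.2.1), widthForm t
      = (5 * ∑ d ∈ n.divisors, (d : ℚ) ^ 3 - 6 * ∑ d ∈ n.divisors, (d : ℚ) ^ 2
          + ∑ d ∈ n.divisors, (d : ℚ)) / 6 := by
  calc ∑ t ∈ (solutions n).filter (fun t => t.1 = t.2.1), widthForm t
      = ∑ t ∈ (solutions n).filter (fun t => t.2.2.2 = t.2.2.1), widthForm (transpose t) := by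
        rw [← sum_filter_comp_of_involutive_s6 transpose_involutive transpose_mem_solutions]
        exact sum_congr (filter_congr fun _ _ => eq_comm) fun _ _ => rfl
    _ = ∑ x ∈ n.divisorsAntidiagonal, (5 * (x.1 : ℚ) ^ 3 - 6 * (x.1 : ℚ) ^ 2 + x.1) / 6 := by
        rw [sum_filter_widths_eq_sum_divisorsAntidiagonal]
        exact sum_congr rfl fun x _ => sum_Ioo_sq_add_mul_add_sq x.1
    _ = ∑ d ∈ n.divisors, (5 * (d : ℚ) ^ 3 - 6 * (d : ℚ) ^ 2 + d) / 6 :=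
        Nat.sum_divisorsAntidiagonal fun m _ => (5 * (m : ℚ) ^ 3 - 6 * (m : ℚ) ^ 2 + m) / 6
    _ = _ := by rw [← sum_div, sum_add_distrib, sum_sub_distrib, ← mul_sum, ← mul_sum]

end TwoCylinder

open TwoCylinder

theorem two_cylinder_count_general (n : ℕ) :
    ∑ t ∈ (Finset.Ioc 0 n ×ˢ Finset.Ioc 0 n ×ˢ Finset.Ioc 0 n ×ˢ Finset.Ioc 0 n).filter
        (fun t : ℕ × ℕ × ℕ × ℕ =>
          t.2.2.2 < t.2.2.1 ∧ t.1 * t.2.2.1 + t.2.1 * t.2.2.2 = n),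
        ((t.2.2.1 * t.2.2.2 : ℕ) : ℚ)
      = (5 / 24) * (∑ d ∈ n.divisors, (d : ℚ) ^ 3)
        + (1 / 2) * (∑ d ∈ n.divisors, (d : ℚ) ^ 2)
        + (1 / 24) * (∑ d ∈ n.divisors, (d : ℚ))
        - (3 / 4) * (n : ℚ) * (∑ d ∈ n.divisors, (d : ℚ)) := by
  have hset : (Ioc 0 n ×ˢ Ioc 0 n ×ˢ Ioc 0 n ×ˢ Ioc 0 n).filter
        (fun t : ℕ × ℕ × ℕ × ℕ => t.2.2.2 < t.2.2.1 ∧ t.1 * t.2.2.1 + t.2.1 * t.2.2.2 = n)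
      = (solutions n).filter (fun t => t.2.2.2 < t.2.2.1) := by
    rw [solutions, filter_filter]
    exact filter_congr fun _ _ => and_comm
  have h := four_mul_sum_filter_widths_lt n
  rw [sum_filter_heights_eq_widthForm, sum_filter_widths_eq_widthForm] at h
  rw [hset]
  push_cast
  linarith

theorem two_cylinder_count (n : ℕ) (hn : 0 < n) :
    ∑ t ∈ (Finset.Ioc 0 n ×ˢ Finset.Ioc 0 n ×ˢ Finset.Ioc 0 n ×ˢ Finset.Ioc 0 n).filter
        (fun t : ℕ × ℕ × ℕ × ℕ =>
          t.2.2.2 < t.2.2.1 ∧ t.1 * t.2.2.1 + t.2.1 * t.2.2.2 = n),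
        ((t.2.2.1 * t.2.2.2 : ℕ) : ℚ)
      = (5 / 24) * (∑ d ∈ n.divisors, (d : ℚ) ^ 3)
        + (1 / 2) * (∑ d ∈ n.divisors, (d : ℚ) ^ 2)
        + (1 / 24) * (∑ d ∈ n.divisors, (d : ℚ))
        - (3 / 4) * (n : ℚ) * (∑ d ∈ n.divisors, (d : ℚ)) :=
  two_cylinder_count_general n
end
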